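/- If U is uniformly distributed on [0, 2π], B has the Beta(1, r+1) distribution on [0,1] (with r > -1), and U and B are independent, then the complex random variable X = e^{iU}·√B has density η_r(z) = ((r+1)/π)·(1-|z|²)^r on the open unit disk D ⊂ ℂ. -/

import Mathlib

/-!
In real coordinates `X = F (U, B)` with `F (u, b) = (√b cos u, √b sin u)`, i.e. polar coordinates
with squared radius. `F` maps `(0, 2π) × (0, 1)` injectively onto the unit disk minus a radius, and
its Jacobian determinant is the constant `-1/2`. So the joint density `(r + 1)(1 - b)^r / (2π)` of
`(U, B)` is transported to the density `2 · (r + 1)(1 - |z|²)^r / (2π) = η_r(z)` of `X`.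
-/

open MeasureTheory ProbabilityTheory Real Set
open scoped ENNReal

theorem map_withDensity_comp {α β : Type*} [MeasurableSpace α] [MeasurableSpace β]
    (μ : Measure α) {f : α → β} (hf : Measurable f) {g : β → ℝ≥0∞} (hg : Measurable g) :
    (μ.withDensity fun x => g (f x)).map f = (μ.map f).withDensity g := by
  ext t ht
  rw [Measure.map_apply hf ht, withDensity_apply _ (hf ht), withDensity_apply _ ht,
    setLIntegral_map ht hg hf]

theorem map_withDensity_abs_det_fderiv_mul {E : Type*} [NormedAddCommGroup E] [NormedSpace ℝ E]
    [FiniteDimensional ℝ E] [MeasurableSpace E] [BorelSpace E] (μ : Measure E)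
    [μ.IsAddHaarMeasure] {s : Set E} {f : E → E} {f' : E → E →L[ℝ] E} (hs : MeasurableSet s)
    (hf : Measurable f) (hf' : ∀ x ∈ s, HasFDerivWithinAt f (f' x) s x) (hinj : InjOn f s)
    {g : E → ℝ≥0∞} (hg : Measurable g) (hg_supp : ∀ᵐ x ∂μ, g x ≠ 0 → x ∈ f '' s) :
    ((μ.restrict s).withDensity fun x => ENNReal.ofReal |(f' x).det| * g (f x)).map f =
      μ.withDensity g := by
  rw [← Pi.mul_def, withDensity_mul₀ (g := fun x => g (f x))
      (aemeasurable_ofReal_abs_det_fderivWithin μ hs hf') (hg.comp hf).aemeasurable,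
    map_withDensity_comp _ hf hg,
    map_withDensity_abs_det_fderiv_eq_addHaar μ hs.nullMeasurableSet hf' hinj,
    ← restrict_withDensity (measurable_image_of_fderivWithin hs hf' hinj)]
  exact Measure.restrict_eq_self_of_ae_mem ((ae_withDensity_iff hg).2 hg_supp)

theorem map_prodMk_eq_smul_withDensity {Ω α β : Type*} [MeasurableSpace Ω] [MeasurableSpace α]
    [MeasurableSpace β] {P : Measure Ω} [IsFiniteMeasure P] {μ : Measure α} {ν : Measure β}
    [SFinite μ] [SFinite ν] {X : Ω → α} {Y : Ω → β} (hX : Measurable X) (hY : Measurable Y)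
    (hXY : IndepFun X Y P) {c : ℝ≥0∞} {g : β → ℝ≥0∞} (hg : Measurable g)
    (hXlaw : P.map X = c • μ) (hYlaw : P.map Y = ν.withDensity g) :
    P.map (fun ω => (X ω, Y ω)) = c • (μ.prod ν).withDensity fun z => g z.2 := by
  rw [(indepFun_iff_map_prod_eq_prod_map_map hX.aemeasurable hY.aemeasurable).1 hXY, hXlaw, hYlaw,
    Measure.prod_smul_left, prod_withDensity_right hg]

theorem withDensity_beta_one_eq {a : ℝ} (ha : 0 < a) :
    volume.withDensity (fun x => ENNReal.ofReal
      (if x ∈ Icc (0 : ℝ) 1 then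
        Gamma (1 + a) / (Gamma 1 * Gamma a) * x ^ ((1 : ℝ) - 1) * (1 - x) ^ (a - 1) else 0)) =
      (volume.restrict (Ioo 0 1)).withDensity fun x => ENNReal.ofReal (a * (1 - x) ^ (a - 1)) := by
  have hΓ : Gamma (1 + a) / Gamma a = a := by
    rw [add_comm, Gamma_add_one ha.ne', mul_div_cancel_right₀ _ (Gamma_pos_of_pos ha).ne']
  have hdensity : (fun x => ENNReal.ofReal
      (if x ∈ Icc (0 : ℝ) 1 then
        Gamma (1 + a) / (Gamma 1 * Gamma a) * x ^ ((1 : ℝ) - 1) * (1 - x) ^ (a - 1) else 0)) =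
      (Icc 0 1).indicator fun x => ENNReal.ofReal (a * (1 - x) ^ (a - 1)) := by
    ext x
    by_cases hx : x ∈ Icc (0 : ℝ) 1 <;> simp [hx, hΓ]
  rw [hdensity, withDensity_indicator measurableSet_Icc, Measure.restrict_congr_set Ioo_ae_eq_Icc]

noncomputable def sqrtPolar (p : ℝ × ℝ) : ℝ × ℝ := polarCoord.symm (√p.2, p.1)

noncomputable def fderivSqrtPolar (p : ℝ × ℝ) : ℝ × ℝ →L[ℝ] ℝ × ℝ :=
  (fderivPolarCoordSymm (√p.2, p.1)).comp
    (((1 / (2 * √p.2)) • ContinuousLinearMap.snd ℝ ℝ ℝ).prod (ContinuousLinearMap.fst ℝ ℝ ℝ))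

theorem hasFDerivAt_sqrtPolar {p : ℝ × ℝ} (hp : 0 < p.2) :
    HasFDerivAt sqrtPolar (fderivSqrtPolar p) p :=
  (hasFDerivAt_polarCoord_symm _).comp p
    (((hasDerivAt_sqrt hp.ne').comp_hasFDerivAt p hasFDerivAt_snd).prodMk hasFDerivAt_fst)

theorem det_fderivSqrtPolar {p : ℝ × ℝ} (hp : 0 < p.2) : (fderivSqrtPolar p).det = -(1 / 2) := by
  have hsqrt : ContinuousLinearMap.det
      (((1 / (2 * √p.2)) • ContinuousLinearMap.snd ℝ ℝ ℝ).prod (ContinuousLinearMap.fst ℝ ℝ ℝ)) =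
      -(1 / (2 * √p.2)) := by
    rw [ContinuousLinearMap.det, ← LinearMap.det_toMatrix (Module.Basis.finTwoProd ℝ),
      Matrix.det_fin_two]
    simp [LinearMap.toMatrix_apply]
  rw [fderivSqrtPolar, ContinuousLinearMap.det, ContinuousLinearMap.toLinearMap_comp,
    LinearMap.det_comp, ← ContinuousLinearMap.det, ← ContinuousLinearMap.det,
    det_fderivPolarCoordSymm, hsqrt]
  field_simp [(sqrt_pos.2 hp).ne']

-- Shifting the angle by `π` moves `(0, 2π)` into the angular range `(-π, π)` of `polarCoord`.
theorem neg_sqrtPolar (p : ℝ × ℝ) : -sqrtPolar p = polarCoord.symm (√p.2, p.1 - π) := by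
  simp [sqrtPolar, cos_sub_pi, sin_sub_pi]

theorem injOn_sqrtPolar : InjOn sqrtPolar (Ioo 0 (2 * π) ×ˢ Ioi 0) := by
  rintro ⟨u, b⟩ ⟨hu, hb⟩ ⟨u', b'⟩ ⟨hu', hb'⟩ h
  have hmem : ∀ {u b : ℝ}, u ∈ Ioo 0 (2 * π) → b ∈ Ioi 0 → (√b, u - π) ∈ polarCoord.target :=
    fun hu hb => ⟨sqrt_pos.2 hb, by linarith [hu.1], by linarith [hu.2]⟩
  have hpolar := polarCoord.symm.injOn (hmem hu hb) (hmem hu' hb')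
    (by simpa only [neg_sqrtPolar] using congrArg Neg.neg h)
  simp only [Prod.mk.injEq, sqrt_inj (le_of_lt hb) (le_of_lt hb'), sub_left_inj] at hpolar
  simp [hpolar]

theorem exists_sqrtPolar_eq {x : ℝ × ℝ} (hx : x.2 ≠ 0) :
    ∃ u ∈ Ioo 0 (2 * π), sqrtPolar (u, x.1 ^ 2 + x.2 ^ 2) = x := by
  have hsource : -x ∈ polarCoord.source := Or.inr (neg_ne_zero.2 hx)
  set q := polarCoord (-x) with hq
  have hθ : q.2 ∈ Ioo (-π) π := (polarCoord.map_source hsource).2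
  have hr : q.1 = √(x.1 ^ 2 + x.2 ^ 2) := by simp [hq]
  refine ⟨q.2 + π, ⟨by linarith [hθ.1], by linarith [hθ.2]⟩, ?_⟩
  rw [← neg_neg (sqrtPolar _), neg_sqrtPolar, add_sub_cancel_right, ← hr, neg_eq_iff_eq_neg]
  exact polarCoord.left_inv hsource

theorem measurableEquivRealProd_symm_sqrtPolar (p : ℝ × ℝ) :
    Complex.measurableEquivRealProd.symm (sqrtPolar p) = Complex.exp (p.1 * Complex.I) * √p.2 := by
  rw [sqrtPolar, Complex.measurableEquivRealProd_symm_polarCoord_symm_apply,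
    Complex.polarCoord_symm_apply, Complex.exp_mul_I]
  push_cast
  ring

theorem norm_measurableEquivRealProd_symm_sqrtPolar (p : ℝ × ℝ) :
    ‖Complex.measurableEquivRealProd.symm (sqrtPolar p)‖ = √p.2 := by
  rw [sqrtPolar, Complex.measurableEquivRealProd_symm_polarCoord_symm_apply,
    Complex.norm_polarCoord_symm, abs_of_nonneg (sqrt_nonneg _)]

theorem sq_norm_measurableEquivRealProd_symm (x : ℝ × ℝ) :
    ‖Complex.measurableEquivRealProd.symm x‖ ^ 2 = x.1 ^ 2 + x.2 ^ 2 := by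
  rw [Complex.sq_norm, Complex.normSq_apply, Complex.measurableEquivRealProd_symm_apply]
  ring

noncomputable def diskDensity (r : ℝ) (z : ℂ) : ℝ≥0∞ :=
  ENNReal.ofReal (if ‖z‖ < 1 then (r + 1) / π * (1 - ‖z‖ ^ 2) ^ r else 0)

theorem measurable_diskDensity (r : ℝ) : Measurable (diskDensity r) :=
  Measurable.ennreal_ofReal <| Measurable.ite (measurableSet_lt measurable_norm measurable_const)
    (by fun_prop) measurable_const

theorem norm_lt_one_of_diskDensity_ne_zero {r : ℝ} {z : ℂ} (hz : diskDensity r z ≠ 0) :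
    ‖z‖ < 1 := by
  by_contra h
  simp [diskDensity, h] at hz

theorem abs_det_fderivSqrtPolar_mul_diskDensity (r : ℝ) {p : ℝ × ℝ} (hp : p.2 ∈ Ioo 0 1) :
    ENNReal.ofReal |(fderivSqrtPolar p).det| *
        diskDensity r (Complex.measurableEquivRealProd.symm (sqrtPolar p)) =
      (ENNReal.ofReal (2 * π))⁻¹ * ENNReal.ofReal ((r + 1) * (1 - p.2) ^ r) := by
  have hlt : √p.2 < 1 := sqrt_one ▸ sqrt_lt_sqrt (le_of_lt hp.1) hp.2
  rw [diskDensity, norm_measurableEquivRealProd_symm_sqrtPolar, if_pos hlt,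
    sq_sqrt (le_of_lt hp.1), det_fderivSqrtPolar hp.1, ← ENNReal.ofReal_mul (abs_nonneg _),
    ← ENNReal.ofReal_inv_of_pos (by positivity), ← ENNReal.ofReal_mul (by positivity)]
  congr 1
  rw [abs_neg, abs_of_pos one_half_pos]
  field_simp

theorem ae_diskDensity_ne_zero_imp_mem_image_sqrtPolar (r : ℝ) :
    ∀ᵐ x : ℝ × ℝ, diskDensity r (Complex.measurableEquivRealProd.symm x) ≠ 0 →
      x ∈ sqrtPolar '' (Ioo 0 (2 * π) ×ˢ Ioo 0 1) := by
  have hx2 : ∀ᵐ x : ℝ × ℝ, x.2 ≠ 0 :=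
    Measure.quasiMeasurePreserving_snd.ae (compl_mem_ae_iff.2 (measure_singleton 0))
  filter_upwards [hx2] with x hx hne
  have hlt : x.1 ^ 2 + x.2 ^ 2 < 1 := by
    rw [← sq_norm_measurableEquivRealProd_symm]
    exact pow_lt_one₀ (norm_nonneg _) (norm_lt_one_of_diskDensity_ne_zero hne) two_ne_zero
  obtain ⟨u, hu, hux⟩ := exists_sqrtPolar_eq hx
  exact ⟨_, ⟨hu, by positivity, hlt⟩, hux⟩

theorem exp_sqrt_beta_density
    {Ω : Type*} [MeasurableSpace Ω] (P : Measure Ω) [IsProbabilityMeasure P]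
    (r : ℝ) (hr : -1 < r)
    (U B : Ω → ℝ) (hU : Measurable U) (hB : Measurable B)
    (hUlaw : Measure.map U P
      = (ENNReal.ofReal (2 * π))⁻¹ • volume.restrict (Set.Icc 0 (2 * π)))
    (hBlaw : Measure.map B P
      = volume.withDensity fun x =>
          ENNReal.ofReal
            (if x ∈ Set.Icc (0 : ℝ) 1 then
              (Real.Gamma (1 + (r + 1)) / (Real.Gamma 1 * Real.Gamma (r + 1))) *
                x ^ ((1 : ℝ) - 1) * (1 - x) ^ ((r + 1) - 1)
            else 0))
    (hInd : IndepFun U B P) :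
    Measure.map (fun ω => Complex.exp (U ω * Complex.I) * (Real.sqrt (B ω) : ℂ)) P
      = (volume : Measure ℂ).withDensity fun z =>
          ENNReal.ofReal
            (if ‖z‖ < 1 then (r + 1) / π * (1 - ‖z‖ ^ 2) ^ (r : ℝ) else 0) := by
  change _ = volume.withDensity (diskDensity r)
  set e := Complex.measurableEquivRealProd.symm
  set S : Set (ℝ × ℝ) := Ioo 0 (2 * π) ×ˢ Ioo 0 1
  have hS : MeasurableSet S := measurableSet_Ioo.prod measurableSet_Ioo
  have hsqrtPolar : Measurable sqrtPolar := by unfold sqrtPolar; fun_prop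
  have hUlaw' : P.map U = (ENNReal.ofReal (2 * π))⁻¹ • volume.restrict (Ioo 0 (2 * π)) := by
    rw [hUlaw, Measure.restrict_congr_set Ioo_ae_eq_Icc]
  have hpair : P.map (fun ω => (U ω, B ω)) = (volume.restrict S).withDensity fun p =>
      ENNReal.ofReal |(fderivSqrtPolar p).det| * diskDensity r (e (sqrtPolar p)) := by
    rw [map_prodMk_eq_smul_withDensity hU hB hInd (by fun_prop) hUlaw'
      (hBlaw.trans (withDensity_beta_one_eq (by linarith))), add_sub_cancel_right,
      Measure.prod_restrict, ← Measure.volume_eq_prod, ← withDensity_smul _ (by fun_prop)]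
    exact withDensity_congr_ae (ae_restrict_of_forall_mem hS fun p hp =>
      (abs_det_fderivSqrtPolar_mul_diskDensity r hp.2).symm)
  have hX : (fun ω => Complex.exp (U ω * Complex.I) * (√(B ω) : ℂ)) =
      e ∘ sqrtPolar ∘ fun ω => (U ω, B ω) :=
    funext fun ω => (measurableEquivRealProd_symm_sqrtPolar (U ω, B ω)).symm
  rw [hX, ← Measure.map_map e.measurable (hsqrtPolar.comp (hU.prodMk hB)),
    ← Measure.map_map hsqrtPolar (hU.prodMk hB), hpair,
    map_withDensity_abs_det_fderiv_mul (g := fun x => diskDensity r (e x)) volume hS hsqrtPolar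
      (fun p hp => (hasFDerivAt_sqrtPolar hp.2.1).hasFDerivWithinAt)
      (injOn_sqrtPolar.mono (prod_mono_right Ioo_subset_Ioi_self))
      ((measurable_diskDensity r).comp e.measurable)
      (ae_diskDensity_ne_zero_imp_mem_image_sqrtPolar r),
    map_withDensity_comp _ e.measurable (measurable_diskDensity r),
    (Complex.volume_preserving_equiv_real_prod.symm _).map_eq]
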